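/- Let L_X, L_Y be Laplacians of connected graphs on the same node set. If every generalized eigenvalue λ_i of the pencil (L_X, L_Y) (eigenvalues of L_Y⁺L_X on the subspace orthogonal to 1) satisfies λ_i ≤ Λ, then for every distinct pair (p,q), the effective-resistance DMD satisfies γ^F(p,q) = d_Y(p,q)/d_X(p,q) ≤ Λ, where d_X, d_Y are effective-resistance distances in G_X and G_Y respectively. -/

import Mathlib

/-!
Put `u = L_X⁺ e` with `e = e_p - e_q ⊥ 1`. Since `G_X` is connected, `L_X u = e`, so
`d_X = uᵀ L_X u` and `d_Y = (L_X u)ᵀ L_Y⁺ (L_X u)`. Factoring `L_X = Bᵀ B` and putting `g = B u`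
turns these into `gᵀ g` and `gᵀ (B L_Y⁺ Bᵀ) g`, and the symmetric matrix `B L_Y⁺ Bᵀ` has the same
spectrum as `L_Y⁺ Bᵀ B = L_Y⁺ L_X`. An eigenvector of `L_Y⁺ L_X` for a nonzero eigenvalue lies in
the range of `L_Y⁺`, which is orthogonal to `1`, so the hypothesis bounds the nonzero spectrum by
`Λ`, and the Rayleigh quotient bound gives `d_Y ≤ Λ d_X`.
-/

open Matrix

/-- `B` is the Moore–Penrose pseudoinverse of `A`. -/
def IsMoorePenroseInv {N : ℕ} (A B : Matrix (Fin N) (Fin N) ℝ) : Prop :=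
  A * B * A = A ∧ B * A * B = B ∧ (A * B)ᵀ = A * B ∧ (B * A)ᵀ = B * A

namespace Matrix

open scoped MatrixOrder

variable {n : Type*} [Fintype n] [DecidableEq n]

theorem spectrum_mul_comm {K : Type*} [Field K] (A B : Matrix n n K) :
    spectrum K (A * B) = spectrum K (B * A) := by
  ext μ
  simp only [mem_spectrum_iff_isRoot_charpoly, charpoly_mul_comm]

theorem exists_mulVec_eq_smul_of_mem_spectrum {K : Type*} [Field K] {M : Matrix n n K} {μ : K}
    (hμ : μ ∈ spectrum K M) : ∃ v ≠ 0, M *ᵥ v = μ • v := by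
  rw [← spectrum_toLin', ← Module.End.hasEigenvalue_iff_mem_spectrum] at hμ
  obtain ⟨v, hv, hv0⟩ := hμ.exists_hasEigenvector
  exact ⟨v, hv0, by simpa using Module.End.mem_eigenspace_iff.1 hv⟩

theorem IsHermitian.dotProduct_mulVec_le_of_spectrum_le {M : Matrix n n ℝ} (hM : M.IsHermitian)
    {Λ : ℝ} (hΛ : ∀ μ ∈ spectrum ℝ M, μ ≤ Λ) (x : n → ℝ) :
    x ⬝ᵥ (M *ᵥ x) ≤ Λ * (x ⬝ᵥ x) := by
  have hle : M ≤ algebraMap ℝ _ Λ := (le_algebraMap_iff_spectrum_le hM.isSelfAdjoint).2 hΛ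
  have := (le_iff.1 hle).dotProduct_mulVec_nonneg x
  simp only [star_trivial, Algebra.algebraMap_eq_smul_one, sub_mulVec, smul_mulVec, one_mulVec,
    dotProduct_sub, dotProduct_smul, smul_eq_mul] at this
  linarith

theorem dotProduct_mulVec_le_of_spectrum_mul_le {A Y : Matrix n n ℝ} (hA : A.PosSemidef)
    (hY : Y.IsHermitian) {Λ : ℝ} (hΛ0 : 0 ≤ Λ)
    (hΛ : ∀ μ ∈ spectrum ℝ (Y * A), μ ≠ 0 → μ ≤ Λ) (u : n → ℝ) :
    (A *ᵥ u) ⬝ᵥ (Y *ᵥ (A *ᵥ u)) ≤ Λ * (u ⬝ᵥ (A *ᵥ u)) := by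
  obtain ⟨B, rfl⟩ := CStarAlgebra.nonneg_iff_eq_star_mul_self.1 hA.nonneg
  rw [star_eq_conjTranspose, conjTranspose_eq_transpose_of_trivial] at hΛ ⊢
  have hM : (B * Y * Bᵀ).IsHermitian := by
    simpa [conjTranspose_eq_transpose_of_trivial] using isHermitian_mul_mul_conjTranspose B hY
  have hspec : ∀ μ ∈ spectrum ℝ (B * Y * Bᵀ), μ ≤ Λ := by
    intro μ hμ
    rcases eq_or_ne μ 0 with rfl | hμ0
    · exact hΛ0
    · rw [Matrix.mul_assoc, spectrum_mul_comm, Matrix.mul_assoc] at hμ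
      exact hΛ μ hμ hμ0
  have hBt : ∀ g w, (Bᵀ *ᵥ g) ⬝ᵥ w = g ⬝ᵥ (B *ᵥ w) := fun g w => by
    rw [mulVec_transpose, dotProduct_mulVec]
  have := hM.dotProduct_mulVec_le_of_spectrum_le hspec (B *ᵥ u)
  rw [← mulVec_mulVec, hBt, dotProduct_comm u, hBt]
  simpa only [← mulVec_mulVec] using this

end Matrix

theorem SimpleGraph.eq_zero_of_lapMatrix_mulVec_eq_zero {V : Type*} [Fintype V] [DecidableEq V]
    {G : SimpleGraph V} [DecidableRel G.Adj] (hG : G.Connected) {x : V → ℝ}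
    (hx : G.lapMatrix ℝ *ᵥ x = 0) (h1 : x ⬝ᵥ (fun _ => 1) = 0) : x = 0 := by
  funext i
  have hconst : ∀ j, x j = x i := fun j =>
    (G.lapMatrix_mulVec_eq_zero_iff_forall_reachable.1 hx) j i (hG.preconnected j i)
  have hsum : (Fintype.card V : ℝ) * x i = 0 := by
    simpa [dotProduct, hconst] using h1
  have : Nonempty V := ⟨i⟩
  exact (mul_eq_zero.1 hsum).resolve_left (Nat.cast_ne_zero.2 Fintype.card_ne_zero)

namespace IsMoorePenroseInv

section

variable {N : ℕ} {A B : Matrix (Fin N) (Fin N) ℝ}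

theorem unique {B₁ B₂ : Matrix (Fin N) (Fin N) ℝ} (h₁ : IsMoorePenroseInv A B₁)
    (h₂ : IsMoorePenroseInv A B₂) : B₁ = B₂ := by
  obtain ⟨hABA₁, hBAB₁, hAB₁, hBA₁⟩ := h₁
  obtain ⟨hABA₂, hBAB₂, hAB₂, hBA₂⟩ := h₂
  have hAB : A * B₁ = A * B₂ := calc
    A * B₁ = (A * B₂ * A * B₁)ᵀ := by rw [hABA₂, hAB₁]
    _ = (A * B₁)ᵀ * (A * B₂)ᵀ := by rw [Matrix.mul_assoc (A * B₂), transpose_mul]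
    _ = A * B₂ := by rw [hAB₁, hAB₂, ← Matrix.mul_assoc, hABA₁]
  have hBA : B₁ * A = B₂ * A := calc
    B₁ * A = (B₁ * (A * B₂ * A))ᵀ := by rw [hABA₂, hBA₁]
    _ = (B₂ * A)ᵀ * (B₁ * A)ᵀ := by
      rw [Matrix.mul_assoc A, ← Matrix.mul_assoc B₁, transpose_mul]
    _ = B₂ * A := by rw [hBA₁, hBA₂, Matrix.mul_assoc, ← Matrix.mul_assoc A, hABA₁]
  calc B₁ = B₁ * A * B₁ := hBAB₁.symm
    _ = B₂ * (A * B₂) := by rw [hBA, Matrix.mul_assoc, hAB]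
    _ = B₂ := by rw [← Matrix.mul_assoc, hBAB₂]

theorem transpose (hA : Aᵀ = A) (h : IsMoorePenroseInv A B) : IsMoorePenroseInv A Bᵀ := by
  obtain ⟨hABA, hBAB, hAB, hBA⟩ := h
  have hABt : A * Bᵀ = B * A := by rw [← hBA, transpose_mul, hA]
  have hBtA : Bᵀ * A = A * B := by rw [← hAB, transpose_mul, hA]
  refine ⟨?_, ?_, by rw [hABt, hBA], by rw [hBtA, hAB]⟩
  · simpa only [transpose_mul, hA, Matrix.mul_assoc] using congrArg Matrix.transpose hABA
  · simpa only [transpose_mul, hA, Matrix.mul_assoc] using congrArg Matrix.transpose hBAB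

theorem transpose_eq (hA : Aᵀ = A) (h : IsMoorePenroseInv A B) : Bᵀ = B :=
  (h.transpose hA).unique h

theorem mul_comm (hA : Aᵀ = A) (h : IsMoorePenroseInv A B) : A * B = B * A := by
  rw [← h.2.2.1, transpose_mul, hA, h.transpose_eq hA]

end

variable {N : ℕ} {G : SimpleGraph (Fin N)} [DecidableRel G.Adj] {B : Matrix (Fin N) (Fin N) ℝ}

theorem mulVec_dotProduct_one (hB : IsMoorePenroseInv (G.lapMatrix ℝ) B) (w : Fin N → ℝ) :
    (B *ᵥ w) ⬝ᵥ (fun _ => 1) = 0 := by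
  have hL := G.isSymm_lapMatrix ℝ
  have hB1 : B *ᵥ (fun _ => 1) = 0 := calc
    B *ᵥ (fun _ => 1) = (B * (G.lapMatrix ℝ * B)) *ᵥ (fun _ => 1) := by
      rw [← Matrix.mul_assoc, hB.2.1]
    _ = (B * B) *ᵥ (G.lapMatrix ℝ *ᵥ (fun _ => 1)) := by
      rw [hB.mul_comm hL, ← Matrix.mul_assoc, mulVec_mulVec]
    _ = 0 := by rw [G.lapMatrix_mulVec_const_eq_zero, mulVec_zero]
  rw [dotProduct_comm, dotProduct_mulVec, ← mulVec_transpose, hB.transpose_eq hL, hB1,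
    zero_dotProduct]

theorem le_of_mem_spectrum_mul (hB : IsMoorePenroseInv (G.lapMatrix ℝ) B)
    (C : Matrix (Fin N) (Fin N) ℝ) {Λ : ℝ}
    (hΛ : ∀ (μ : ℝ) (v : Fin N → ℝ), v ≠ 0 → v ⬝ᵥ (fun _ => 1) = 0 →
      (B * C) *ᵥ v = μ • v → μ ≤ Λ)
    {μ : ℝ} (hμ : μ ∈ spectrum ℝ (B * C)) (hμ0 : μ ≠ 0) : μ ≤ Λ := by
  obtain ⟨v, hv0, hv⟩ := exists_mulVec_eq_smul_of_mem_spectrum hμ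
  have hvB : v = B *ᵥ (μ⁻¹ • C *ᵥ v) := by
    rw [mulVec_smul, mulVec_mulVec, hv, smul_smul, inv_mul_cancel₀ hμ0, one_smul]
  exact hΛ μ v hv0 (hvB ▸ hB.mulVec_dotProduct_one _) hv

theorem lapMatrix_mulVec_mulVec (hG : G.Connected) (hB : IsMoorePenroseInv (G.lapMatrix ℝ) B)
    {e : Fin N → ℝ} (he : e ⬝ᵥ (fun _ => 1) = 0) : G.lapMatrix ℝ *ᵥ (B *ᵥ e) = e := by
  rw [mulVec_mulVec, hB.mul_comm (G.isSymm_lapMatrix ℝ), ← sub_eq_zero]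
  obtain ⟨hLBL, -, -, hBL⟩ := hB
  refine SimpleGraph.eq_zero_of_lapMatrix_mulVec_eq_zero hG ?_ ?_
  · rw [mulVec_sub, mulVec_mulVec, ← Matrix.mul_assoc, hLBL, sub_self]
  · rw [sub_dotProduct, he, sub_zero, dotProduct_comm, dotProduct_mulVec, ← mulVec_transpose,
      hBL, ← mulVec_mulVec, G.lapMatrix_mulVec_const_eq_zero, mulVec_zero, zero_dotProduct]

theorem dotProduct_mulVec_pos (hG : G.Connected) (hB : IsMoorePenroseInv (G.lapMatrix ℝ) B)
    {e : Fin N → ℝ} (he : e ⬝ᵥ (fun _ => 1) = 0) (he0 : e ≠ 0) : 0 < e ⬝ᵥ (B *ᵥ e) := by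
  have hLBe := hB.lapMatrix_mulVec_mulVec hG he
  have hL := G.posSemidef_lapMatrix ℝ
  have hform : e ⬝ᵥ (B *ᵥ e) = (B *ᵥ e) ⬝ᵥ (G.lapMatrix ℝ *ᵥ (B *ᵥ e)) := by
    rw [hLBe, dotProduct_comm]
  rw [hform]
  refine lt_of_le_of_ne (by simpa using hL.dotProduct_mulVec_nonneg (B *ᵥ e)) fun h => he0 ?_
  rw [← hLBe]
  simpa using (hL.dotProduct_mulVec_zero_iff (B *ᵥ e)).1 (by simpa using h.symm)

end IsMoorePenroseInv

open IsMoorePenroseInv in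
/-- If every generalized eigenvalue of the pencil (eigenvalues of `L_Y⁺L_X` on the
subspace orthogonal to the all-ones vector) is at most `Λ`, then every
effective-resistance distance mapping distortion `γ^F(p,q) = d_Y(p,q)/d_X(p,q)` is at
most `Λ`. -/
theorem dmd_le_of_eigenvalue_bound (N : ℕ)
    (GX GY : SimpleGraph (Fin N)) [DecidableRel GX.Adj] [DecidableRel GY.Adj]
    (hGX : GX.Connected) (hGY : GY.Connected)
    (Xp Yp : Matrix (Fin N) (Fin N) ℝ)
    (hXp : IsMoorePenroseInv (GX.lapMatrix ℝ) Xp)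
    (hYp : IsMoorePenroseInv (GY.lapMatrix ℝ) Yp)
    (Λ : ℝ)
    (hΛ : ∀ (μ : ℝ) (v : Fin N → ℝ), v ≠ 0 → v ⬝ᵥ (fun _ => (1 : ℝ)) = 0 →
      (Yp * GX.lapMatrix ℝ).mulVec v = μ • v → μ ≤ Λ) :
    ∀ p q : Fin N, p ≠ q →
      ((Pi.single p 1 - Pi.single q 1) ⬝ᵥ Yp.mulVec (Pi.single p 1 - Pi.single q 1)) /
        ((Pi.single p 1 - Pi.single q 1) ⬝ᵥ Xp.mulVec (Pi.single p 1 - Pi.single q 1)) ≤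
      Λ := by
  intro p q hpq
  set e : Fin N → ℝ := Pi.single p 1 - Pi.single q 1
  have he : e ⬝ᵥ (fun _ => 1) = 0 := by simp [e, sub_dotProduct, single_dotProduct]
  have he0 : e ≠ 0 := fun h => by simpa [e, hpq] using congrFun h p
  have hdX := hXp.dotProduct_mulVec_pos hGX he he0
  have hdY := hYp.dotProduct_mulVec_pos hGY he he0
  have hYs : Yp.IsHermitian := by
    rw [IsHermitian, conjTranspose_eq_transpose_of_trivial]
    exact hYp.transpose_eq (GY.isSymm_lapMatrix ℝ)
  -- `0` lies in the spectrum of `Yp * L_X` but is not covered by `hΛ`, hence `max Λ 0`;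
  -- positivity of `d_Y` then forces `Λ > 0`.
  have hbound := dotProduct_mulVec_le_of_spectrum_mul_le (GX.posSemidef_lapMatrix ℝ) hYs
    (le_max_right Λ 0)
    (fun μ hμ hμ0 => (hYp.le_of_mem_spectrum_mul _ hΛ hμ hμ0).trans (le_max_left Λ 0))
    (Xp *ᵥ e)
  rw [hXp.lapMatrix_mulVec_mulVec hGX he, dotProduct_comm (Xp *ᵥ e)] at hbound
  have hle : e ⬝ᵥ (Yp *ᵥ e) / e ⬝ᵥ (Xp *ᵥ e) ≤ max Λ 0 := (div_le_iff₀ hdX).2 hbound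
  have hΛpos : 0 < Λ := by simpa using (div_pos hdY hdX).trans_le hle
  rwa [max_eq_left hΛpos.le] at hle
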